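/- arXiv:1912.07859 — 5 statements merged into one kernel-verified Lean document; each statement's English description precedes it below -/
import Mathlib

section
/- For all configurations x, y ∈ {0,1}^V and every vertex i ∈ V: if x ≤ y componentwise and Φ_c(1, x_{-i}) ≥ Φ_c(x), then Φ_c(1, y_{-i}) ≥ Φ_c(y). -/
open Finset

variable {V : Type*}

/-- Agreement of a configuration on an (unordered) edge. -/
def agreeFun (x : V → Bool) : Sym2 V → Bool :=
  Sym2.lift ⟨fun a b => x a == x b, fun a b => by show (x a == x b) = (x b == x a); cases x a <;> cases x b <;> rfl⟩

/-- The potential of the majority game: number of edges whose endpoints agree. -/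
def Phi [Fintype V] [DecidableEq V] (G : SimpleGraph V) [DecidableRel G.Adj]
    (x : V → Bool) : ℕ :=
  (G.edgeFinset.filter (fun e => agreeFun x e = true)).card

/-- Number of neighbors of `i` playing action `a` in configuration `x`. -/
def nCount [Fintype V] (G : SimpleGraph V) [DecidableRel G.Adj]
    (x : V → Bool) (i : V) (a : Bool) : ℕ :=
  ((G.neighborFinset i).filter (fun j => x j = a)).card

/-- Majority-game utility: number of neighbors agreeing with `i`. -/
def lamC [Fintype V] (G : SimpleGraph V) [DecidableRel G.Adj]
    (x : V → Bool) (i : V) : ℕ :=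
  ((G.neighborFinset i).filter (fun j => x j = x i)).card

/-- Minority-game utility: number of neighbors disagreeing with `i`. -/
def lamA [Fintype V] (G : SimpleGraph V) [DecidableRel G.Adj]
    (x : V → Bool) (i : V) : ℕ :=
  ((G.neighborFinset i).filter (fun j => x j ≠ x i)).card

/-- `x` is a Nash equilibrium of the minority game. -/
def MinorityNE [Fintype V] [DecidableEq V] (G : SimpleGraph V) [DecidableRel G.Adj]
    (x : V → Bool) : Prop :=
  ∀ (i : V) (a : Bool), lamA G (Function.update x i a) i ≤ lamA G x i

/-- A monotone crusade from `C`: starts at the indicator of `C`, ends at all-ones,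
and at each step one coordinate outside `C` is flipped from `0` to `1`. -/
def IsCrusade [DecidableEq V] (C : Finset V) (m : ℕ) (xs : ℕ → V → Bool) : Prop :=
  xs 0 = (fun v => decide (v ∈ C)) ∧ xs m = (fun _ => true) ∧
    ∀ k < m, ∃ i, i ∉ C ∧ xs k i = false ∧ xs (k + 1) = Function.update (xs k) i true

/-- `C` is a `Φ_c`-valid control set: there is a `Φ_c`-adapted monotone crusade from `C`. -/
def ValidControlSet [Fintype V] [DecidableEq V] (G : SimpleGraph V) [DecidableRel G.Adj]
    (C : Finset V) : Prop :=
  ∃ m xs, IsCrusade C m xs ∧ ∀ k < m, Phi G (xs k) ≤ Phi G (xs (k + 1))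

/-- `x ∈ Z`: reachable from the all-ones configuration by allowed down-flips. -/
def InZ [Fintype V] [DecidableEq V] (G : SimpleGraph V) [DecidableRel G.Adj]
    (x : V → Bool) : Prop :=
  ∃ m, ∃ ys : ℕ → V → Bool, ys 0 = (fun _ => true) ∧ ys m = x ∧
    ∀ k < m, ∃ i, ys k i = true ∧ nCount G (ys k) i false ≤ nCount G (ys k) i true ∧
      ys (k + 1) = Function.update (ys k) i false

/-- `‖x‖₁`: number of coordinates equal to `1`. -/
def norm1 [Fintype V] (x : V → Bool) : ℕ :=
  (Finset.univ.filter (fun v => x v = true)).card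

lemma agreeFun_update_of_notMem [DecidableEq V] (x : V → Bool) (i : V) (b : Bool)
    (e : Sym2 V) (he : i ∉ e) :
    agreeFun (Function.update x i b) e = agreeFun x e := by
  induction e using Sym2.ind with
  | _ a c =>
    simp only [Sym2.mem_iff, not_or] at he
    simp [agreeFun, Function.update_of_ne (Ne.symm he.1), Function.update_of_ne (Ne.symm he.2)]

lemma card_incident_agree [Fintype V] [DecidableEq V]
    (G : SimpleGraph V) [DecidableRel G.Adj] (z : V → Bool) (i : V) :
    (G.edgeFinset.filter (fun e => agreeFun z e = true ∧ i ∈ e)).card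
      = ((G.neighborFinset i).filter (fun j => z j = z i)).card := by
  have himg : G.edgeFinset.filter (fun e => agreeFun z e = true ∧ i ∈ e)
      = ((G.neighborFinset i).filter (fun j => z j = z i)).image (fun j => s(i, j)) := by
    ext e
    simp only [Finset.mem_filter, Finset.mem_image, SimpleGraph.mem_neighborFinset,
      SimpleGraph.mem_edgeFinset]
    constructor
    · rintro ⟨hE, hag, hi⟩
      refine ⟨Sym2.Mem.other hi, ⟨?_, ?_⟩, Sym2.other_spec hi⟩
      · have : s(i, Sym2.Mem.other hi) ∈ G.edgeSet := by rw [Sym2.other_spec hi]; exact hE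
        exact this
      · have : agreeFun z s(i, Sym2.Mem.other hi) = true := by rw [Sym2.other_spec hi]; exact hag
        have h2 : (z i == z (Sym2.Mem.other hi)) = true := this
        exact (eq_of_beq h2).symm
    · rintro ⟨j, ⟨hadj, hz⟩, rfl⟩
      refine ⟨hadj, ?_, Sym2.mem_mk_left i j⟩
      show (z i == z j) = true
      rw [hz]
      exact beq_self_eq_true (z i)
  rw [himg]
  apply Finset.card_image_of_injOn
  intro a _ b _ hab
  exact Sym2.congr_right.mp hab

lemma phi_split [Fintype V] [DecidableEq V]
    (G : SimpleGraph V) [DecidableRel G.Adj] (z : V → Bool) (i : V) :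
    Phi G z = (G.edgeFinset.filter (fun e => agreeFun z e = true ∧ i ∈ e)).card
      + (G.edgeFinset.filter (fun e => agreeFun z e = true ∧ i ∉ e)).card := by
  unfold Phi
  rw [← Finset.filter_filter, ← Finset.filter_filter,
    Finset.card_filter_add_card_filter_not (fun e => i ∈ e)]

lemma phi_update_eq [Fintype V] [DecidableEq V]
    (G : SimpleGraph V) [DecidableRel G.Adj] (x : V → Bool) (i : V) :
    Phi G (Function.update x i true) + nCount G x i (x i)
      = Phi G x + nCount G x i true := by
  have hoff : (G.edgeFinset.filter
        (fun e => agreeFun (Function.update x i true) e = true ∧ i ∉ e))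
      = (G.edgeFinset.filter (fun e => agreeFun x e = true ∧ i ∉ e)) := by
    apply Finset.filter_congr
    intro e _
    constructor
    · rintro ⟨hag, hni⟩
      exact ⟨by rw [← agreeFun_update_of_notMem x i true e hni]; exact hag, hni⟩
    · rintro ⟨hag, hni⟩
      exact ⟨by rw [agreeFun_update_of_notMem x i true e hni]; exact hag, hni⟩
  have hupd : ((G.neighborFinset i).filter
        (fun j => Function.update x i true j = Function.update x i true i)).card
      = nCount G x i true := by
    unfold nCount
    congr 1
    apply Finset.filter_congr
    intro j hj
    have hadj : G.Adj i j := (SimpleGraph.mem_neighborFinset G i j).mp hj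
    have hne : j ≠ i := (G.ne_of_adj hadj.symm)
    simp [Function.update_of_ne hne]
  have hx : nCount G x i (x i)
      = ((G.neighborFinset i).filter (fun j => x j = x i)).card := rfl
  rw [phi_split G (Function.update x i true) i, phi_split G x i,
    card_incident_agree G (Function.update x i true) i, card_incident_agree G x i,
    hoff, hupd, hx]
  unfold nCount
  ring

lemma nCount_le_of_h [Fintype V] [DecidableEq V]
    (G : SimpleGraph V) [DecidableRel G.Adj] (x : V → Bool) (i : V)
    (h : Phi G x ≤ Phi G (Function.update x i true)) :
    nCount G x i (x i) ≤ nCount G x i true := by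
  have := phi_update_eq G x i
  omega

/-- monotonicity of the potential improvement for up-flips. -/
theorem phi_monotone_up [Fintype V] [DecidableEq V]
    (G : SimpleGraph V) [DecidableRel G.Adj] (x y : V → Bool) (i : V)
    (hxy : x ≤ y) (h : Phi G x ≤ Phi G (Function.update x i true)) :
    Phi G y ≤ Phi G (Function.update y i true) := by
  have key : nCount G y i (y i) ≤ nCount G y i true := by
    cases hyi : y i with
    | true => simp [hyi]
    | false =>
      have hxi : x i = false := by
        have := hxy i; rw [hyi] at this
        exact Bool.eq_false_of_le_false this
      have hx := nCount_le_of_h G x i h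
      rw [hxi] at hx
      have h1 : nCount G y i false ≤ nCount G x i false := by
        apply Finset.card_le_card
        intro j hj
        rw [Finset.mem_filter] at hj ⊢
        refine ⟨hj.1, ?_⟩
        have := hxy j; rw [hj.2] at this
        exact Bool.eq_false_of_le_false this
      have h2 : nCount G x i true ≤ nCount G y i true := by
        apply Finset.card_le_card
        intro j hj
        rw [Finset.mem_filter] at hj ⊢
        refine ⟨hj.1, ?_⟩
        have := hxy j; rw [hj.2] at this
        exact Bool.eq_true_of_true_le this
      exact le_trans h1 (le_trans hx h2)
  have := phi_update_eq G y i
  omega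
end

section
/- For all configurations x, y ∈ {0,1}^V and every vertex i ∈ V: if x ≥ y componentwise and Φ_c(0, x_{-i}) ≥ Φ_c(x), then Φ_c(0, y_{-i}) ≥ Φ_c(y). -/
open Finset

variable {V : Type*}

/-!
Setting coordinate `i` of `z` to `a` only changes the agreement of the edges at `i`, so
`Φ(a, z₋ᵢ) - Φ(z) = n_a - n_{z i}`, where `n_b` counts the neighbours of `i` playing `b`.
Hence the gain of a down-flip at a vertex playing `1` is `n₀ - n₁`, which can only grow when
the configuration decreases; a vertex already playing `0` gains nothing.
-/

namespace MajorityGame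

lemma agreeFun_update_of_notMem [DecidableEq V] {z : V → Bool} {i : V} {e : Sym2 V} (he : i ∉ e)
    (a : Bool) : agreeFun (Function.update z i a) e = agreeFun z e := by
  induction e using Sym2.ind with
  | _ u v =>
    obtain ⟨hu, hv⟩ := not_or.mp (Sym2.mem_iff.not.mp he)
    simp [agreeFun, Function.update_of_ne (Ne.symm hu), Function.update_of_ne (Ne.symm hv)]

variable [Fintype V] (G : SimpleGraph V) [DecidableRel G.Adj]

lemma nCount_update_self [DecidableEq V] (z : V → Bool) (i : V) (a b : Bool) :
    nCount G (Function.update z i a) i b = nCount G z i b := by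
  unfold nCount
  congr 1
  refine Finset.filter_congr fun j hj => ?_
  rw [Function.update_of_ne (G.ne_of_adj ((G.mem_neighborFinset i j).mp hj)).symm]

lemma nCount_true_mono {x y : V → Bool} (hxy : y ≤ x) (i : V) :
    nCount G y i true ≤ nCount G x i true :=
  Finset.card_le_card <| Finset.monotone_filter_right _ fun j _ hj => hxy j hj

lemma nCount_false_anti {x y : V → Bool} (hxy : y ≤ x) (i : V) :
    nCount G x i false ≤ nCount G y i false :=
  Finset.card_le_card <| Finset.monotone_filter_right _ fun j _ hj => by
    simpa [hj, Bool.le_iff_imp] using hxy j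

variable [DecidableEq V]

lemma card_agree_incident_eq_nCount (z : V → Bool) (i : V) :
    #{e ∈ G.edgeFinset | agreeFun z e = true ∧ i ∈ e} = nCount G z i (z i) := by
  symm
  refine Finset.card_bij (fun j _ => s(i, j)) ?_ (fun _ _ _ _ => Sym2.congr_right.mp) ?_
  · intro j hj
    simp only [Finset.mem_filter, SimpleGraph.mem_neighborFinset] at hj
    exact Finset.mem_filter.mpr
      ⟨G.mem_edgeFinset.mpr hj.1, by simp [agreeFun, hj.2], Sym2.mem_mk_left i j⟩
  · intro e he
    rw [Finset.mem_filter, SimpleGraph.mem_edgeFinset] at he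
    induction e using Sym2.ind with
    | _ u v =>
      simp only [SimpleGraph.mem_edgeSet, agreeFun, Sym2.lift_mk, beq_iff_eq, Sym2.mem_iff] at he
      obtain ⟨hadj, hag, rfl | rfl⟩ := he
      · exact ⟨v, by simp [hadj, hag], rfl⟩
      · exact ⟨u, by simp [hadj.symm, hag], Sym2.eq_swap⟩

lemma phi_eq_card_agree_add_nCount (z : V → Bool) (i : V) :
    Phi G z = #{e ∈ G.edgeFinset | agreeFun z e = true ∧ i ∉ e} + nCount G z i (z i) := by
  rw [Phi, ← card_agree_incident_eq_nCount, ← Finset.filter_filter, ← Finset.filter_filter,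
    add_comm, Finset.card_filter_add_card_filter_not]

theorem phi_update_add_nCount (z : V → Bool) (i : V) (a : Bool) :
    Phi G (Function.update z i a) + nCount G z i (z i) = Phi G z + nCount G z i a := by
  have hrest : #{e ∈ G.edgeFinset | agreeFun (Function.update z i a) e = true ∧ i ∉ e}
      = #{e ∈ G.edgeFinset | agreeFun z e = true ∧ i ∉ e} := by
    congr 1
    exact Finset.filter_congr fun e _ =>
      ⟨fun h => ⟨agreeFun_update_of_notMem h.2 a ▸ h.1, h.2⟩,
        fun h => ⟨(agreeFun_update_of_notMem h.2 a).symm ▸ h.1, h.2⟩⟩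
  rw [phi_eq_card_agree_add_nCount G _ i, phi_eq_card_agree_add_nCount G z i, hrest,
    Function.update_self, nCount_update_self]
  ring

end MajorityGame

open MajorityGame in
/-- monotonicity of the potential improvement for down-flips. -/
theorem phi_monotone_down [Fintype V] [DecidableEq V]
    (G : SimpleGraph V) [DecidableRel G.Adj] (x y : V → Bool) (i : V)
    (hxy : y ≤ x) (h : Phi G x ≤ Phi G (Function.update x i false)) :
    Phi G y ≤ Phi G (Function.update y i false) := by
  cases hyi : y i
  · rw [← hyi, Function.update_eq_self]
  have hxi : x i = true := hxy i (by simp [hyi])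
  have hx := phi_update_add_nCount G x i false
  have hy := phi_update_add_nCount G y i false
  rw [hxi] at hx
  rw [hyi] at hy
  have := nCount_true_mono G hxy i
  have := nCount_false_anti G hxy i
  omega
end

section
/- If C ⊆ V is a Φ_c-valid control set and C' ⊆ V satisfies C ⊆ C', then C' is a Φ_c-valid control set. -/
/-! Turning `j` on at the very start of a `Φ_c`-adapted crusade from `C`, and skipping its later
flip, gives an adapted crusade from `insert j C`. The reason is that `Φ_c` is supermodular along
upward flips: the only edge on which two flips `i ≠ j` interact is `{i, j}`, which agrees before and
after both flips and disagrees in between. Hence a flip of `i` that does not decrease `Φ_c` at `x`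
does not decrease it at `x + δ_j` either. Induction on `C' \ C` finishes the proof. -/

open Finset

variable {V : Type*}

open Relation Function

theorem Relation.reflTransGen_iff_exists_seq {α : Type*} {r : α → α → Prop} {a b : α} :
    ReflTransGen r a b ↔ ∃ m, ∃ f : ℕ → α, f 0 = a ∧ f m = b ∧ ∀ k < m, r (f k) (f (k + 1)) := by
  constructor
  · intro h
    induction h using ReflTransGen.head_induction_on with
    | refl => exact ⟨0, fun _ => b, rfl, rfl, by simp⟩
    | @head a c hac _ ih =>
      obtain ⟨m, f, hf0, hfm, hf⟩ := ih
      refine ⟨m + 1, fun k => Nat.casesOn k a f, rfl, hfm, fun k hk => ?_⟩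
      cases k with
      | zero => simpa [hf0] using hac
      | succ k => exact hf k (by omega)
  · rintro ⟨m, f, rfl, rfl, hf⟩
    have hindex : ReflTransGen (fun i j => i < m ∧ j = i + 1) 0 m :=
      reflTransGen_of_succ_of_le _ (fun i hi => ⟨hi.2, rfl⟩) (Nat.zero_le m)
    exact ReflTransGen.lift f (fun i _ ⟨hi, hj⟩ => hj ▸ hf i hi) _ _ hindex

section

variable [DecidableEq V]

theorem agreeFun_update_add_le {x : V → Bool} {i j : V} (hij : i ≠ j) (hi : x i = false)
    (hj : x j = false) (e : Sym2 V) :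
    (if agreeFun (update x i true) e then 1 else 0) + (if agreeFun (update x j true) e then 1 else 0)
      ≤ (if agreeFun x e then 1 else 0) +
        (if agreeFun (update (update x i true) j true) e then 1 else 0) := by
  induction e using Sym2.inductionOn with
  | hf u v =>
    simp only [agreeFun, Sym2.lift_mk, update_apply]
    by_cases hui : u = i <;> by_cases hvi : v = i <;> by_cases huj : u = j <;>
      by_cases hvj : v = j <;> simp_all <;> cases x u <;> cases x v <;> simp

variable [Fintype V] (G : SimpleGraph V) [DecidableRel G.Adj]

theorem Phi_update_add_le {x : V → Bool} {i j : V} (hij : i ≠ j) (hi : x i = false)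
    (hj : x j = false) :
    Phi G (update x i true) + Phi G (update x j true) ≤
      Phi G x + Phi G (update (update x i true) j true) := by
  simp only [Phi, card_filter, ← sum_add_distrib]
  exact sum_le_sum fun e _ => agreeFun_update_add_le hij hi hj e

end

section

variable [Fintype V] [DecidableEq V] (G : SimpleGraph V) [DecidableRel G.Adj]

def AdaptedFlip (C : Finset V) (x y : V → Bool) : Prop :=
  ∃ i ∉ C, x i = false ∧ y = update x i true ∧ Phi G x ≤ Phi G y

theorem validControlSet_iff_reflTransGen (C : Finset V) :
    ValidControlSet G C ↔
      ReflTransGen (AdaptedFlip G C) (fun v => decide (v ∈ C)) (fun _ => true) := by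
  rw [reflTransGen_iff_exists_seq]
  constructor
  · rintro ⟨m, xs, ⟨h0, hm, hstep⟩, hPhi⟩
    refine ⟨m, xs, h0, hm, fun k hk => ?_⟩
    obtain ⟨i, hiC, hi, hnext⟩ := hstep k hk
    exact ⟨i, hiC, hi, hnext, hPhi k hk⟩
  · rintro ⟨m, xs, h0, hm, hstep⟩
    choose i hiC hi hnext hPhi using hstep
    exact ⟨m, xs, ⟨h0, hm, fun k hk => ⟨i k hk, hiC k hk, hi k hk, hnext k hk⟩⟩, hPhi⟩

variable {G}

theorem AdaptedFlip.reflTransGen_update_insert {C : Finset V} {x y : V → Bool}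
    (h : AdaptedFlip G C x y) (j : V) :
    ReflTransGen (AdaptedFlip G (insert j C)) (update x j true) (update y j true) := by
  obtain ⟨i, hiC, hi, rfl, hPhi⟩ := h
  rcases eq_or_ne i j with rfl | hij
  · rw [update_idem]
  refine .single ⟨i, by simp [hiC, hij], by rwa [update_of_ne hij], update_comm hij _ _ _, ?_⟩
  cases hj : x j
  · have := Phi_update_add_le G hij hi hj
    omega
  · rwa [update_eq_self_iff.mpr hj.symm, update_eq_self_iff.mpr (by simp [hij.symm, hj])]

theorem ValidControlSet.insert {C : Finset V} (hC : ValidControlSet G C) (j : V) :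
    ValidControlSet G (insert j C) := by
  rw [validControlSet_iff_reflTransGen] at hC ⊢
  have := ReflTransGen.lift' (update · j true)
    (fun _ _ h => h.reflTransGen_update_insert j) _ _ hC
  convert this using 1
  · ext v
    by_cases hv : v = j <;> simp [hv]
  · simp

end

/-- a superset of a `Φ_c`-valid control set is a `Φ_c`-valid control set. -/
theorem validControlSet_superset [Fintype V] [DecidableEq V]
    (G : SimpleGraph V) [DecidableRel G.Adj] (C C' : Finset V)
    (hC : ValidControlSet G C) (hsub : C ⊆ C') :
    ValidControlSet G C' := by
  have hunion (s : Finset V) : ValidControlSet G (C ∪ s) := by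
    induction s using Finset.induction_on with
    | empty => simpa using hC
    | insert j s _ ih => simpa [union_insert] using ih.insert j
  simpa [union_eq_right.mpr hsub] using hunion C'
end

section
/- If C ⊆ V is a Φ_c-valid control set and i ∈ C is a vertex such that n_{i,1}(1_C) ≥ n_{i,0}(1_C), then C ∖ {i} is also a Φ_c-valid control set. -/
open Finset

variable {V : Type*}

/-
Flipping a single vertex `i` changes only the edges at `i`, so `Φ_c` changes by exactly the
change in the number of neighbours agreeing with `i`. Switching `i` from `0` to `1` in `1_{C∖{i}}`
therefore does not decrease `Φ_c` when `n_{i,1} ≥ n_{i,0}`, and this switch, followed by an adapted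
crusade from `C`, is an adapted crusade from `C ∖ {i}`.
-/

@[simp]
lemma agreeFun_mk (x : V → Bool) (a b : V) : agreeFun x s(a, b) = (x a == x b) := rfl

lemma agreeFun_congr {x y : V → Bool} {e : Sym2 V} (h : ∀ v ∈ e, x v = y v) :
    agreeFun x e = agreeFun y e := by
  induction e using Sym2.inductionOn with
  | hf a b => simp [h a (Sym2.mem_mk_left a b), h b (Sym2.mem_mk_right a b)]

section Potential

variable [Fintype V] [DecidableEq V] (G : SimpleGraph V) [DecidableRel G.Adj]

lemma card_agree_mem_eq_lamC (x : V → Bool) (i : V) :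
    #{e ∈ G.edgeFinset | agreeFun x e = true ∧ i ∈ e} = lamC G x i := by
  symm
  refine Finset.card_bij (fun j _ => s(i, j)) ?_ (fun _ _ _ _ => Sym2.congr_right.mp) ?_
  · intro j hj
    simp only [Finset.mem_filter, SimpleGraph.mem_neighborFinset] at hj
    simp [hj.1, hj.2]
  · intro e he
    induction e using Sym2.inductionOn with
    | hf a b =>
      simp only [Finset.mem_filter, SimpleGraph.mem_edgeFinset, SimpleGraph.mem_edgeSet,
        agreeFun_mk, beq_iff_eq, Sym2.mem_iff] at he
      obtain ⟨hab, hxab, rfl | rfl⟩ := he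
      · exact ⟨b, by simp [hab, hxab], rfl⟩
      · exact ⟨a, by simp [hab.symm, hxab], Sym2.eq_swap⟩

lemma Phi_eq_lamC_add (x : V → Bool) (i : V) :
    Phi G x = lamC G x i + #{e ∈ G.edgeFinset | agreeFun x e = true ∧ i ∉ e} := by
  rw [← card_agree_mem_eq_lamC, Phi, ← Finset.card_filter_add_card_filter_not (fun e => i ∈ e),
    Finset.filter_filter, Finset.filter_filter]

lemma Phi_add_lamC_update (x : V → Bool) (i : V) (b : Bool) :
    Phi G x + lamC G (Function.update x i b) i = Phi G (Function.update x i b) + lamC G x i := by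
  have hoff : #{e ∈ G.edgeFinset | agreeFun x e = true ∧ i ∉ e}
      = #{e ∈ G.edgeFinset | agreeFun (Function.update x i b) e = true ∧ i ∉ e} := by
    refine congrArg _ (Finset.filter_congr fun e _ => and_congr_left fun hie => ?_)
    rw [agreeFun_congr fun v hv => (Function.update_of_ne (ne_of_mem_of_not_mem hv hie) b x).symm]
  rw [Phi_eq_lamC_add G x i, Phi_eq_lamC_add G _ i, hoff]
  ring

lemma nCount_update_self (x : V → Bool) (i : V) (a b : Bool) :
    nCount G (Function.update x i b) i a = nCount G x i a := by
  refine congrArg _ (Finset.filter_congr fun j hj => ?_)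
  rw [Function.update_of_ne (G.ne_of_adj ((G.mem_neighborFinset i j).mp hj)).symm]

lemma Phi_le_Phi_update_true {x : V → Bool} {i : V} (hx : x i = false)
    (hn : nCount G x i false ≤ nCount G x i true) :
    Phi G x ≤ Phi G (Function.update x i true) := by
  have hlam : lamC G x i = nCount G x i false := by rw [lamC, hx, nCount]
  have hlam' : lamC G (Function.update x i true) i = nCount G x i true := by
    rw [lamC, Function.update_self, ← nCount, nCount_update_self]
  have := Phi_add_lamC_update G x i true
  omega

end Potential

lemma update_indicator_erase [DecidableEq V] {C : Finset V} {i : V} (hi : i ∈ C) :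
    Function.update (fun v => decide (v ∈ C.erase i)) i true = fun v => decide (v ∈ C) := by
  funext v
  rcases eq_or_ne v i with rfl | hv
  · simp [hi]
  · simp [hv]

lemma IsCrusade.cons_erase [DecidableEq V] {C : Finset V} {i : V} (hi : i ∈ C) {m : ℕ}
    {xs : ℕ → V → Bool} (hxs : IsCrusade C m xs) :
    IsCrusade (C.erase i) (m + 1)
      (fun | 0 => fun v => decide (v ∈ C.erase i) | k + 1 => xs k) := by
  obtain ⟨h0, hm, hstep⟩ := hxs
  refine ⟨rfl, hm, fun k hk => ?_⟩
  rcases k with _ | k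
  · exact ⟨i, C.notMem_erase i, by simp, h0.trans (update_indicator_erase hi).symm⟩
  · obtain ⟨j, hjC, hj⟩ := hstep k (by omega)
    exact ⟨j, fun h => hjC (Finset.mem_of_mem_erase h), hj⟩

lemma ValidControlSet.erase_of_Phi_le [Fintype V] [DecidableEq V] {G : SimpleGraph V}
    [DecidableRel G.Adj] {C : Finset V} {i : V} (hi : i ∈ C) (hC : ValidControlSet G C)
    (hΦ : Phi G (fun v => decide (v ∈ C.erase i)) ≤ Phi G (fun v => decide (v ∈ C))) :
    ValidControlSet G (C.erase i) := by
  obtain ⟨m, xs, hxs, hadapted⟩ := hC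
  refine ⟨m + 1, _, hxs.cons_erase hi, fun k hk => ?_⟩
  rcases k with _ | k
  · simpa [hxs.1] using hΦ
  · exact hadapted k (by omega)

/-- removing from a valid control set a vertex whose `1`-neighbors are at
least its `0`-neighbors (in `1_C`) keeps the set valid. -/
theorem validControlSet_erase [Fintype V] [DecidableEq V]
    (G : SimpleGraph V) [DecidableRel G.Adj] (C : Finset V) (i : V)
    (hi : i ∈ C) (hC : ValidControlSet G C)
    (hn : nCount G (fun v => decide (v ∈ C)) i false
            ≤ nCount G (fun v => decide (v ∈ C)) i true) :
    ValidControlSet G (C.erase i) := by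
  refine hC.erase_of_Phi_le hi ?_
  rw [← update_indicator_erase hi] at hn ⊢
  simp only [nCount_update_self] at hn
  exact Phi_le_Phi_update_true G (by simp) hn
end

section
/- The set Z is closed under allowed up-flips: if x ∈ Z and i ∈ V is a vertex with x_i = 0 and n_{i,1}(x) ≥ n_{i,0}(x), then the configuration (1, x_{-i}) obtained by setting coordinate i of x to 1 also belongs to Z. -/
open Finset

variable {V : Type*}

lemma nCount_true_mono [Fintype V] [DecidableEq V] (G : SimpleGraph V) [DecidableRel G.Adj]
    (x : V → Bool) (i j : V) :
    nCount G x j true ≤ nCount G (Function.update x i true) j true := by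
  apply Finset.card_le_card
  intro v hv
  simp only [Finset.mem_filter] at *
  refine ⟨hv.1, ?_⟩
  rcases eq_or_ne v i with rfl | h
  · simp
  · simp [Function.update_of_ne h, hv.2]

lemma nCount_false_anti [Fintype V] [DecidableEq V] (G : SimpleGraph V) [DecidableRel G.Adj]
    (x : V → Bool) (i j : V) :
    nCount G (Function.update x i true) j false ≤ nCount G x j false := by
  apply Finset.card_le_card
  intro v hv
  simp only [Finset.mem_filter] at *
  refine ⟨hv.1, ?_⟩
  rcases eq_or_ne v i with rfl | h
  · simp at hv
  · rw [Function.update_of_ne h] at hv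
    exact hv.2

lemma nCount_le_update [Fintype V] [DecidableEq V] (G : SimpleGraph V) [DecidableRel G.Adj]
    {x : V → Bool} {j : V} (i : V)
    (h : nCount G x j false ≤ nCount G x j true) :
    nCount G (Function.update x i true) j false ≤ nCount G (Function.update x i true) j true :=
  le_trans (nCount_false_anti G x i j) (le_trans h (nCount_true_mono G x i j))

lemma inZ_step [Fintype V] [DecidableEq V] (G : SimpleGraph V) [DecidableRel G.Adj]
    {y : V → Bool} {j : V} (hy : InZ G y) (hj : y j = true)
    (hc : nCount G y j false ≤ nCount G y j true) :
    InZ G (Function.update y j false) := by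
  obtain ⟨m, zs, h0, hm, hstep⟩ := hy
  refine ⟨m + 1, fun t => if t ≤ m then zs t else Function.update y j false,
    by simp [h0], by simp, ?_⟩
  intro k hk
  rcases lt_or_eq_of_le (Nat.lt_succ_iff.mp hk) with hk' | rfl
  · obtain ⟨i', h1, h2, h3⟩ := hstep k hk'
    refine ⟨i', ?_, ?_, ?_⟩
    · simpa [Nat.le_of_lt hk'] using h1
    · simpa [Nat.le_of_lt hk'] using h2
    · simp [Nat.le_of_lt hk', Nat.succ_le_of_lt hk', h3]
  · exact ⟨j, by simp [hm, hj], by simp [hm, hc], by simp [hm]⟩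

lemma inZ_aux [Fintype V] [DecidableEq V] (G : SimpleGraph V) [DecidableRel G.Adj] :
    ∀ m (ys : ℕ → V → Bool), ys 0 = (fun _ => true) →
    (∀ k < m, ∃ i, ys k i = true ∧ nCount G (ys k) i false ≤ nCount G (ys k) i true ∧
      ys (k + 1) = Function.update (ys k) i false) →
    ∀ i, ys m i = false → nCount G (ys m) i false ≤ nCount G (ys m) i true →
    InZ G (Function.update (ys m) i true) := by
  intro m
  induction m with
  | zero =>
    intro ys h0 _ i hi _
    rw [h0] at hi
    simp at hi
  | succ m ih =>
    intro ys h0 hstep i hi hcond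
    obtain ⟨j, hj1, hj2, hj3⟩ := hstep m (Nat.lt_succ_self m)
    have hym : ys m = Function.update (ys (m + 1)) j true := by
      rw [hj3, Function.update_idem, ← hj1, Function.update_eq_self]
    rcases eq_or_ne j i with rfl | hji
    · have h : Function.update (ys (m + 1)) j true = ys m := hym.symm
      rw [h]
      exact ⟨m, ys, h0, rfl, fun k hk => hstep k (Nat.lt_succ_of_lt hk)⟩
    · have hmi : ys m i = false := by
        rw [hym, Function.update_of_ne hji.symm]
        exact hi
      have hcond' : nCount G (ys m) i false ≤ nCount G (ys m) i true := by
        rw [hym]; exact nCount_le_update G j hcond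
      have hZ := ih ys h0 (fun k hk => hstep k (Nat.lt_succ_of_lt hk)) i hmi hcond'
      have hj1' : (Function.update (ys m) i true) j = true := by
        rw [Function.update_of_ne hji]
        exact hj1
      have hcj := nCount_le_update G (x := ys m) (j := j) i hj2
      have hfin := inZ_step G hZ hj1' hcj
      have heq : Function.update (Function.update (ys m) i true) j false
          = Function.update (ys (m + 1)) i true := by
        rw [hj3]
        funext v
        rcases eq_or_ne v j with rfl | hvj
        · rw [Function.update_self, Function.update_of_ne hji, Function.update_self]
        · rw [Function.update_of_ne hvj]
          rcases eq_or_ne v i with rfl | hvi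
          · rw [Function.update_self, Function.update_self]
          · rw [Function.update_of_ne hvi, Function.update_of_ne hvi,
              Function.update_of_ne hvj]
      rwa [heq] at hfin

/-- `Z` is closed under allowed up-flips. -/
theorem inZ_up_flip [Fintype V] [DecidableEq V]
    (G : SimpleGraph V) [DecidableRel G.Adj] (x : V → Bool) (i : V)
    (hx : InZ G x) (hxi : x i = false)
    (hn : nCount G x i false ≤ nCount G x i true) :
    InZ G (Function.update x i true) := by
  obtain ⟨m, ys, h0, hm, hstep⟩ := hx
  subst hm
  exact inZ_aux G m ys h0 hstep i hxi hn
end
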